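/- The operator Δ̂ = L̂_X L̂_Y + ((ŵ−λ₀)/(2λ₀−1)) L̂_{[X,Y]} is self-adjoint with respect to the canonical scalar product on densities, and its restriction to weight λ₀ equals L̂_X ∘ L̂_Y. -/

import Mathlib

open MeasureTheory

noncomputable section

/-- i-th partial derivative of a function on ℝⁿ. -/
def pd (n : ℕ) (i : Fin n) (f : (Fin n → ℝ) → ℝ) : (Fin n → ℝ) → ℝ :=
  fun x => fderiv ℝ f x (Pi.single i 1)

/-- Lie derivative of weight-λ densities along X = Xⁱ∂_i. -/
def lieDeriv (n : ℕ) (X : Fin n → (Fin n → ℝ) → ℝ) (lam : ℝ)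
    (s : (Fin n → ℝ) → ℝ) : (Fin n → ℝ) → ℝ :=
  fun x => (∑ i, X i x * pd n i s x) + lam * (∑ i, pd n i (X i) x) * s x

/-- Commutator of vector fields: [X,Y]ⁱ = Xᵏ∂_kYⁱ − Yᵏ∂_kXⁱ. -/
def vbracket (n : ℕ) (X Y : Fin n → (Fin n → ℝ) → ℝ) :
    Fin n → (Fin n → ℝ) → ℝ :=
  fun i x => (∑ k, X k x * pd n k (Y i) x) - ∑ k, Y k x * pd n k (X i) x

/-- The operator Δ̂ = L̂_XL̂_Y + ((ŵ−λ₀)/(2λ₀−1))L̂_{[X,Y]} acting on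
weight-λ densities. -/
def DhatXY (n : ℕ) (X Y : Fin n → (Fin n → ℝ) → ℝ) (lam0 lam : ℝ)
    (s : (Fin n → ℝ) → ℝ) : (Fin n → ℝ) → ℝ :=
  fun x => lieDeriv n X lam (lieDeriv n Y lam s) x +
    ((lam - lam0) / (2 * lam0 - 1)) * lieDeriv n (vbracket n X Y) lam s x

lemma pd_contDiff {n : ℕ} {f : (Fin n → ℝ) → ℝ} (hf : ContDiff ℝ (⊤ : ℕ∞) f) (i : Fin n) :
    ContDiff ℝ (⊤ : ℕ∞) (pd n i f) := by
  unfold pd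
  exact (hf.fderiv_right (by simp)).clm_apply contDiff_const

lemma pd_hcs {n : ℕ} {f : (Fin n → ℝ) → ℝ} (hf : HasCompactSupport f) (i : Fin n) :
    HasCompactSupport (pd n i f) := by
  apply hf.mono'
  intro x hx
  have hx' : x ∈ Function.support (fderiv ℝ f) := by
    intro h
    apply hx
    simp [pd, h]
  exact support_fderiv_subset ℝ hx'

lemma pd_add {n : ℕ} {f g : (Fin n → ℝ) → ℝ} (hf : Differentiable ℝ f)
    (hg : Differentiable ℝ g) (i : Fin n) (x : Fin n → ℝ) :
    pd n i (fun y => f y + g y) x = pd n i f x + pd n i g x := by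
  simp [pd, fderiv_fun_add (hf x) (hg x)]

lemma pd_mul {n : ℕ} {f g : (Fin n → ℝ) → ℝ} (hf : Differentiable ℝ f)
    (hg : Differentiable ℝ g) (i : Fin n) (x : Fin n → ℝ) :
    pd n i (fun y => f y * g y) x = pd n i f x * g x + f x * pd n i g x := by
  simp [pd, fderiv_fun_mul (hf x) (hg x)]; ring

lemma pd_const_mul {n : ℕ} {f : (Fin n → ℝ) → ℝ} (hf : Differentiable ℝ f) (c : ℝ)
    (i : Fin n) (x : Fin n → ℝ) :
    pd n i (fun y => c * f y) x = c * pd n i f x := by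
  simp [pd, fderiv_const_mul (hf x) c]

lemma pd_sum {n : ℕ} {ι : Type*} (t : Finset ι) {f : ι → (Fin n → ℝ) → ℝ}
    (hf : ∀ j, Differentiable ℝ (f j)) (i : Fin n) (x : Fin n → ℝ) :
    pd n i (fun y => ∑ j ∈ t, f j y) x = ∑ j ∈ t, pd n i (f j) x := by
  simp [pd, fderiv_fun_sum (fun j _ => (hf j x))]

lemma pd_pd_comm {n : ℕ} {f : (Fin n → ℝ) → ℝ} (hf : ContDiff ℝ (⊤ : ℕ∞) f)
    (i j : Fin n) (x : Fin n → ℝ) :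
    pd n i (pd n j f) x = pd n j (pd n i f) x := by
  have hsymm : IsSymmSndFDerivAt ℝ f x := (hf.contDiffAt).isSymmSndFDerivAt (by rw [minSmoothness_of_isRCLikeNormedField]; exact WithTop.coe_le_coe.mpr le_top)
  have hdf : Differentiable ℝ (fderiv ℝ f) :=
    (hf.fderiv_right (m := (⊤ : ℕ∞)) (by simp)).differentiable (by simp)
  have key : ∀ v w : Fin n → ℝ,
      fderiv ℝ (fun y => fderiv ℝ f y w) x v = fderiv ℝ (fderiv ℝ f) x v w := by
    intro v w
    rw [fderiv_clm_apply (hdf x) (differentiableAt_const w)]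
    simp
  show fderiv ℝ (fun y => fderiv ℝ f y (Pi.single j 1)) x (Pi.single i 1) = _
  rw [key, hsymm]
  exact (key _ _).symm

lemma integral_pd_eq_zero {n : ℕ} {f : (Fin n → ℝ) → ℝ} (hf : ContDiff ℝ (⊤ : ℕ∞) f)
    (hsupp : HasCompactSupport f) (i : Fin n) :
    ∫ x, pd n i f x = 0 := by
  have hint : Integrable (fun x => pd n i f x) volume :=
    ((pd_contDiff hf i).continuous).integrable_of_hasCompactSupport (pd_hcs hsupp i)
  have h := integral_mul_fderiv_eq_neg_fderiv_mul_of_integrable (μ := volume)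
    (f := f) (g := fun _ => (1:ℝ)) (v := Pi.single i 1)
    ?_ ?_ ?_ (fun x _ => hf.differentiable (by simp) x) (fun x _ => differentiableAt_const (1:ℝ))
  · have h0 : ∫ (x : Fin n → ℝ), f x * fderiv ℝ (fun _ => (1:ℝ)) x (Pi.single i 1) = 0 := by
      simp
    rw [h0] at h
    have := h.symm
    rw [neg_eq_zero] at this
    simpa [pd] using this
  · exact hint.congr (Filter.EventuallyEq.of_eq (funext fun x => by simp [pd]))
  · simp
  · exact (hf.continuous.integrable_of_hasCompactSupport hsupp).congr (by simp)

lemma lieDeriv_contDiff {n : ℕ} {X : Fin n → (Fin n → ℝ) → ℝ}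
    (hX : ∀ i, ContDiff ℝ (⊤ : ℕ∞) (X i)) {lam : ℝ} {s : (Fin n → ℝ) → ℝ}
    (hs : ContDiff ℝ (⊤ : ℕ∞) s) : ContDiff ℝ (⊤ : ℕ∞) (lieDeriv n X lam s) := by
  unfold lieDeriv
  exact (ContDiff.sum fun i _ => (hX i).mul (pd_contDiff hs i)).add
    (((contDiff_const (c := lam)).mul (ContDiff.sum fun i _ => pd_contDiff (hX i) i)).mul hs)

lemma lieDeriv_hcs {n : ℕ} {X : Fin n → (Fin n → ℝ) → ℝ} {lam : ℝ}
    {s : (Fin n → ℝ) → ℝ} (hs : HasCompactSupport s) :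
    HasCompactSupport (lieDeriv n X lam s) := by
  apply HasCompactSupport.intro hs
  intro x hx
  have h1 : s x = 0 := image_eq_zero_of_notMem_tsupport hx
  have h2 : ∀ i, pd n i s x = 0 := by
    intro i
    have : x ∉ Function.support (fderiv ℝ s) := fun h => hx (support_fderiv_subset ℝ h)
    have hz : fderiv ℝ s x = 0 := by simpa [Function.mem_support, not_not] using this
    simp [pd, hz]
  simp [lieDeriv, h1, h2]

lemma lieD_skew {n : ℕ} {X : Fin n → (Fin n → ℝ) → ℝ} (hX : ∀ i, ContDiff ℝ (⊤ : ℕ∞) (X i))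
    {lam1 lam2 : ℝ} (h : lam1 + lam2 = 1) {s1 s2 : (Fin n → ℝ) → ℝ}
    (hs1 : ContDiff ℝ (⊤ : ℕ∞) s1) (hs2 : ContDiff ℝ (⊤ : ℕ∞) s2) (hc1 : HasCompactSupport s1)
    (hc2 : HasCompactSupport s2) :
    ∫ x, lieDeriv n X lam1 s1 x * s2 x = - ∫ x, s1 x * lieDeriv n X lam2 s2 x := by
  have hd1 := hs1.differentiable (by simp)
  have hd2 := hs2.differentiable (by simp)
  have key : ∀ x, lieDeriv n X lam1 s1 x * s2 x + s1 x * lieDeriv n X lam2 s2 x =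
      ∑ i, pd n i (fun y => X i y * (s1 y * s2 y)) x := by
    intro x
    have e : ∀ i : Fin n, pd n i (fun y => X i y * (s1 y * s2 y)) x =
        pd n i (X i) x * (s1 x * s2 x) +
          ((X i x * pd n i s1 x) * s2 x + s1 x * (X i x * pd n i s2 x)) := by
      intro i
      rw [pd_mul (f := X i) (g := fun y => s1 y * s2 y) ((hX i).differentiable (by simp)) (hd1.mul hd2),
        pd_mul hd1 hd2]
      ring
    rw [Finset.sum_congr rfl fun i _ => e i, Finset.sum_add_distrib,
      Finset.sum_add_distrib, ← Finset.sum_mul, ← Finset.sum_mul, ← Finset.mul_sum]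
    simp only [lieDeriv]
    have hl : lam2 = 1 - lam1 := by linarith
    subst hl
    ring
  have hint1 : Integrable (fun x => lieDeriv n X lam1 s1 x * s2 x) volume := by
    apply Continuous.integrable_of_hasCompactSupport
    · exact ((lieDeriv_contDiff hX hs1).continuous).mul hs2.continuous
    · exact (lieDeriv_hcs (X := X) (lam := lam1) hc1).mul_right
  have hint2 : Integrable (fun x => s1 x * lieDeriv n X lam2 s2 x) volume := by
    apply Continuous.integrable_of_hasCompactSupport
    · exact hs1.continuous.mul (lieDeriv_contDiff hX hs2).continuous
    · exact hc1.mul_right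
  have hsum : ∫ x, (lieDeriv n X lam1 s1 x * s2 x + s1 x * lieDeriv n X lam2 s2 x) = 0 := by
    rw [integral_congr_ae (Filter.EventuallyEq.of_eq (funext key))]
    rw [integral_finset_sum]
    · exact Finset.sum_eq_zero fun i _ =>
        integral_pd_eq_zero ((hX i).mul (hs1.mul hs2)) ((hc1.mul_right).mul_left) i
    · intro i _
      exact ((pd_contDiff ((hX i).mul (hs1.mul hs2)) i).continuous).integrable_of_hasCompactSupport
        (pd_hcs ((hc1.mul_right).mul_left) i)
  rw [integral_add hint1 hint2] at hsum
  linarith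

lemma pd_lieDeriv {n : ℕ} {Y : Fin n → (Fin n → ℝ) → ℝ} {s : (Fin n → ℝ) → ℝ}
    (hY : ∀ k, ContDiff ℝ (⊤ : ℕ∞) (Y k)) (hs : ContDiff ℝ (⊤ : ℕ∞) s) :
    ∀ (lam : ℝ) (i : Fin n) (x : Fin n → ℝ),
    pd n i (lieDeriv n Y lam s) x =
      (∑ k, (pd n i (Y k) x * pd n k s x + Y k x * pd n i (pd n k s) x))
      + (lam * (∑ k, pd n i (pd n k (Y k)) x) * s x
         + lam * (∑ k, pd n k (Y k) x) * pd n i s x) := by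
  intro lam i x
  have hYd : ∀ k, Differentiable ℝ (Y k) := fun k => (hY k).differentiable (by simp)
  have hsd : Differentiable ℝ s := hs.differentiable (by simp)
  have hpdd : ∀ k : Fin n, Differentiable ℝ (pd n k s) :=
    fun k => (pd_contDiff hs k).differentiable (by simp)
  have hpdYd : ∀ k : Fin n, Differentiable ℝ (pd n k (Y k)) :=
    fun k => (pd_contDiff (hY k) k).differentiable (by simp)
  have hf : Differentiable ℝ (fun y => ∑ k, Y k y * pd n k s y) :=
    Differentiable.fun_sum fun k _ => (hYd k).mul (hpdd k)
  have hg1 : Differentiable ℝ (fun y => lam * ∑ k, pd n k (Y k) y) :=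
    (Differentiable.fun_sum fun k _ => hpdYd k).const_mul lam
  have hg : Differentiable ℝ (fun y => (lam * ∑ k, pd n k (Y k) y) * s y) :=
    hg1.mul hsd
  have h1 : lieDeriv n Y lam s =
      fun y => (∑ k, Y k y * pd n k s y) + (lam * ∑ k, pd n k (Y k) y) * s y := rfl
  rw [h1, pd_add (f := fun y => ∑ k, Y k y * pd n k s y)
      (g := fun y => (lam * ∑ k, pd n k (Y k) y) * s y) hf hg i x,
    pd_sum (f := fun k y => Y k y * pd n k s y) Finset.univ (fun k => (hYd k).mul (hpdd k)) i x,
    pd_mul (f := fun y => lam * ∑ k, pd n k (Y k) y) (g := s) hg1 hsd i x,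
    pd_const_mul (f := fun y => ∑ k, pd n k (Y k) y)
      (Differentiable.fun_sum fun k _ => hpdYd k) lam i x,
    pd_sum (f := fun k y => pd n k (Y k) y) Finset.univ hpdYd i x,
    Finset.sum_congr rfl fun k _ => pd_mul (f := Y k) (g := pd n k s) (hYd k) (hpdd k) i x]

lemma LL_expand {n : ℕ} {X Y : Fin n → (Fin n → ℝ) → ℝ} {s : (Fin n → ℝ) → ℝ}
    (hY : ∀ k, ContDiff ℝ (⊤ : ℕ∞) (Y k)) (hs : ContDiff ℝ (⊤ : ℕ∞) s) (lam : ℝ) (x : Fin n → ℝ) :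
    lieDeriv n X lam (lieDeriv n Y lam s) x =
      (∑ i, ∑ k, X i x * pd n i (Y k) x * pd n k s x)
      + (∑ i, ∑ k, X i x * Y k x * pd n i (pd n k s) x)
      + lam * (∑ i, ∑ k, X i x * pd n i (pd n k (Y k)) x) * s x
      + lam * (∑ i, ∑ k, X i x * pd n k (Y k) x * pd n i s x)
      + lam * (∑ i, ∑ k, pd n k (X k) x * Y i x * pd n i s x)
      + lam * lam * (∑ i, ∑ k, pd n k (X k) x * pd n i (Y i) x) * s x := by
  have h1 : lieDeriv n X lam (lieDeriv n Y lam s) x =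
      (∑ i, X i x * pd n i (lieDeriv n Y lam s) x)
        + lam * (∑ i, pd n i (X i) x) * lieDeriv n Y lam s x := rfl
  have h2 : lieDeriv n Y lam s x =
      (∑ k, Y k x * pd n k s x) + lam * (∑ k, pd n k (Y k) x) * s x := rfl
  rw [h1, h2]
  simp only [pd_lieDeriv hY hs]
  simp only [Finset.mul_sum, Finset.sum_mul, mul_add, add_mul, ← Finset.sum_add_distrib]
  exact Finset.sum_congr rfl fun i _ => Finset.sum_congr rfl fun k _ => by ring

lemma pd_sub {n : ℕ} {f g : (Fin n → ℝ) → ℝ} (hf : Differentiable ℝ f)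
    (hg : Differentiable ℝ g) (i : Fin n) (x : Fin n → ℝ) :
    pd n i (fun y => f y - g y) x = pd n i f x - pd n i g x := by
  simp [pd, fderiv_fun_sub (hf x) (hg x)]

lemma pd_vbracket {n : ℕ} {X Y : Fin n → (Fin n → ℝ) → ℝ}
    (hX : ∀ i, ContDiff ℝ (⊤ : ℕ∞) (X i)) (hY : ∀ i, ContDiff ℝ (⊤ : ℕ∞) (Y i)) :
    ∀ (i j : Fin n) (x : Fin n → ℝ),
    pd n j (vbracket n X Y i) x =
      (∑ k, (pd n j (X k) x * pd n k (Y i) x + X k x * pd n j (pd n k (Y i)) x))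
      - ∑ k, (pd n j (Y k) x * pd n k (X i) x + Y k x * pd n j (pd n k (X i)) x) := by
  intro i j x
  have hXd : ∀ k, Differentiable ℝ (X k) := fun k => (hX k).differentiable (by simp)
  have hYd : ∀ k, Differentiable ℝ (Y k) := fun k => (hY k).differentiable (by simp)
  have hpdY : ∀ k : Fin n, Differentiable ℝ (pd n k (Y i)) :=
    fun k => (pd_contDiff (hY i) k).differentiable (by simp)
  have hpdX : ∀ k : Fin n, Differentiable ℝ (pd n k (X i)) :=
    fun k => (pd_contDiff (hX i) k).differentiable (by simp)
  have h1 : vbracket n X Y i =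
      fun y => (∑ k, X k y * pd n k (Y i) y) - ∑ k, Y k y * pd n k (X i) y := rfl
  rw [h1, pd_sub (f := fun y => ∑ k, X k y * pd n k (Y i) y)
      (g := fun y => ∑ k, Y k y * pd n k (X i) y)
      (Differentiable.fun_sum fun k _ => (hXd k).mul (hpdY k))
      (Differentiable.fun_sum fun k _ => (hYd k).mul (hpdX k)) j x,
    pd_sum (f := fun k y => X k y * pd n k (Y i) y) Finset.univ
      (fun k => (hXd k).mul (hpdY k)) j x,
    pd_sum (f := fun k y => Y k y * pd n k (X i) y) Finset.univ
      (fun k => (hYd k).mul (hpdX k)) j x,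
    Finset.sum_congr rfl fun k _ => pd_mul (hXd k) (hpdY k) j x,
    Finset.sum_congr rfl fun k _ => pd_mul (hYd k) (hpdX k) j x]

lemma LB_expand {n : ℕ} {X Y : Fin n → (Fin n → ℝ) → ℝ} {s : (Fin n → ℝ) → ℝ}
    (hX : ∀ i, ContDiff ℝ (⊤ : ℕ∞) (X i)) (hY : ∀ i, ContDiff ℝ (⊤ : ℕ∞) (Y i)) (lam : ℝ)
    (x : Fin n → ℝ) :
    lieDeriv n (vbracket n X Y) lam s x =
      (∑ i, ∑ k, X k x * pd n k (Y i) x * pd n i s x)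
      - (∑ i, ∑ k, Y k x * pd n k (X i) x * pd n i s x)
      + lam * ((∑ i, ∑ k, pd n i (X k) x * pd n k (Y i) x)
             + (∑ i, ∑ k, X k x * pd n i (pd n k (Y i)) x)
             - (∑ i, ∑ k, pd n i (Y k) x * pd n k (X i) x)
             - (∑ i, ∑ k, Y k x * pd n i (pd n k (X i)) x)) * s x := by
  have h1 : lieDeriv n (vbracket n X Y) lam s x =
      (∑ i, vbracket n X Y i x * pd n i s x)
        + lam * (∑ i, pd n i (vbracket n X Y i) x) * s x := rfl
  have h2 : ∀ i : Fin n, vbracket n X Y i x =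
      (∑ k, X k x * pd n k (Y i) x) - ∑ k, Y k x * pd n k (X i) x := fun i => rfl
  rw [h1]
  simp only [pd_vbracket hX hY, h2]
  simp only [Finset.mul_sum, Finset.sum_mul, mul_add, add_mul, mul_sub, sub_mul,
    Finset.sum_add_distrib, Finset.sum_sub_distrib]
  ring

lemma dsum_comm {n : ℕ} (F : Fin n → Fin n → ℝ) :
    (∑ i, ∑ k, F i k) = ∑ i, ∑ k, F k i := Finset.sum_comm

lemma dsum_congr {n : ℕ} {F G : Fin n → Fin n → ℝ} (h : ∀ i k, F i k = G i k) :
    (∑ i, ∑ k, F i k) = ∑ i, ∑ k, G i k :=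
  Finset.sum_congr rfl fun i _ => Finset.sum_congr rfl fun k _ => h i k

lemma lie_comm {n : ℕ} {X Y : Fin n → (Fin n → ℝ) → ℝ} {s : (Fin n → ℝ) → ℝ}
    (hX : ∀ i, ContDiff ℝ (⊤ : ℕ∞) (X i)) (hY : ∀ i, ContDiff ℝ (⊤ : ℕ∞) (Y i))
    (hs : ContDiff ℝ (⊤ : ℕ∞) s) (lam : ℝ) (x : Fin n → ℝ) :
    lieDeriv n Y lam (lieDeriv n X lam s) x =
      lieDeriv n X lam (lieDeriv n Y lam s) x
        - lieDeriv n (vbracket n X Y) lam s x := by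
  rw [LL_expand (X := Y) (Y := X) hX hs lam x, LL_expand (X := X) (Y := Y) hY hs lam x,
    LB_expand hX hY lam x]
  have S1 : (∑ i, ∑ k, X k x * pd n k (Y i) x * pd n i s x)
      = ∑ i, ∑ k, X i x * pd n i (Y k) x * pd n k s x :=
    dsum_comm fun i k => X k x * pd n k (Y i) x * pd n i s x
  have S2 : (∑ i, ∑ k, Y k x * pd n k (X i) x * pd n i s x)
      = ∑ i, ∑ k, Y i x * pd n i (X k) x * pd n k s x :=
    dsum_comm fun i k => Y k x * pd n k (X i) x * pd n i s x
  have S6 : (∑ i, ∑ k, Y i x * X k x * pd n i (pd n k s) x)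
      = ∑ i, ∑ k, X i x * Y k x * pd n i (pd n k s) x := by
    rw [dsum_comm fun i k => Y i x * X k x * pd n i (pd n k s) x]
    exact dsum_congr fun i k => by rw [pd_pd_comm hs]; ring
  have S3 : (∑ i, ∑ k, X k x * pd n i (pd n k (Y i)) x)
      = ∑ i, ∑ k, X i x * pd n i (pd n k (Y k)) x := by
    rw [dsum_comm fun i k => X i x * pd n i (pd n k (Y k)) x]
    exact dsum_congr fun i k => by rw [pd_pd_comm (hY i)]
  have S4 : (∑ i, ∑ k, Y k x * pd n i (pd n k (X i)) x)
      = ∑ i, ∑ k, Y i x * pd n i (pd n k (X k)) x := by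
    rw [dsum_comm fun i k => Y i x * pd n i (pd n k (X k)) x]
    exact dsum_congr fun i k => by rw [pd_pd_comm (hX i)]
  have S5 : (∑ i, ∑ k, pd n i (Y k) x * pd n k (X i) x)
      = ∑ i, ∑ k, pd n i (X k) x * pd n k (Y i) x := by
    rw [dsum_comm fun i k => pd n i (X k) x * pd n k (Y i) x]
    exact dsum_congr fun i k => by ring
  have S7 : (∑ i, ∑ k, Y i x * pd n k (X k) x * pd n i s x)
      = ∑ i, ∑ k, pd n k (X k) x * Y i x * pd n i s x :=
    dsum_congr fun i k => by ring
  have S8 : (∑ i, ∑ k, pd n k (Y k) x * X i x * pd n i s x)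
      = ∑ i, ∑ k, X i x * pd n k (Y k) x * pd n i s x :=
    dsum_congr fun i k => by ring
  have S9 : (∑ i, ∑ k, pd n k (Y k) x * pd n i (X i) x)
      = ∑ i, ∑ k, pd n k (X k) x * pd n i (Y i) x := by
    rw [dsum_comm fun i k => pd n k (X k) x * pd n i (Y i) x]
    exact dsum_congr fun i k => by ring
  linear_combination (-1 : ℝ) * S2 + S6 + S1 + (lam * s x) * S3 - (lam * s x) * S4
    - (lam * s x) * S5 + lam * S7 + lam * S8 + (lam * lam * s x) * S9

lemma vbracket_contDiff {n : ℕ} {X Y : Fin n → (Fin n → ℝ) → ℝ}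
    (hX : ∀ i, ContDiff ℝ (⊤ : ℕ∞) (X i)) (hY : ∀ i, ContDiff ℝ (⊤ : ℕ∞) (Y i)) (i : Fin n) :
    ContDiff ℝ (⊤ : ℕ∞) (vbracket n X Y i) := by
  unfold vbracket
  exact (ContDiff.sum fun k _ => (hX k).mul (pd_contDiff (hY i) k)).sub
    (ContDiff.sum fun k _ => (hY k).mul (pd_contDiff (hX i) k))

/-- Δ̂ = L̂_XL̂_Y + ((ŵ−λ₀)/(2λ₀−1))L̂_{[X,Y]} is self-adjoint with respect
to the canonical scalar product on densities, and its restriction to weight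
λ₀ equals L̂_X ∘ L̂_Y. -/
theorem DhatXY_selfadjoint_and_restriction (n : ℕ)
    (X Y : Fin n → (Fin n → ℝ) → ℝ)
    (hX : ∀ i, ContDiff ℝ (⊤ : ℕ∞) (X i)) (hY : ∀ i, ContDiff ℝ (⊤ : ℕ∞) (Y i))
    (lam0 : ℝ) (hlam0 : lam0 ≠ 1/2) :
    (∀ lam1 lam2 : ℝ, lam1 + lam2 = 1 →
      ∀ s1 s2 : (Fin n → ℝ) → ℝ, ContDiff ℝ (⊤ : ℕ∞) s1 → ContDiff ℝ (⊤ : ℕ∞) s2 →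
        HasCompactSupport s1 → HasCompactSupport s2 →
        ∫ x, DhatXY n X Y lam0 lam1 s1 x * s2 x =
          ∫ x, s1 x * DhatXY n X Y lam0 lam2 s2 x) ∧
    (∀ (s : (Fin n → ℝ) → ℝ) (x : Fin n → ℝ),
      DhatXY n X Y lam0 lam0 s x = lieDeriv n X lam0 (lieDeriv n Y lam0 s) x) := by
  constructor
  · intro lam1 lam2 h s1 s2 hs1 hs2 hc1 hc2
    have h0 : (2 * lam0 - 1) ≠ 0 := fun hh => hlam0 (by linarith)
    set c1 : ℝ := (lam1 - lam0) / (2 * lam0 - 1) with hc1def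
    set c2 : ℝ := (lam2 - lam0) / (2 * lam0 - 1) with hc2def
    have hcc : c2 = -1 - c1 := by
      rw [hc1def, hc2def]
      rw [eq_sub_iff_add_eq, ← add_div, div_eq_iff h0]
      linarith
    have hB : ∀ i, ContDiff ℝ (⊤ : ℕ∞) (vbracket n X Y i) := vbracket_contDiff hX hY
    -- integrability facts
    have I1 : Integrable (fun x => lieDeriv n X lam1 (lieDeriv n Y lam1 s1) x * s2 x) volume :=
      Continuous.integrable_of_hasCompactSupport
        (((lieDeriv_contDiff hX (lieDeriv_contDiff hY hs1)).continuous).mul hs2.continuous)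
        ((lieDeriv_hcs (lieDeriv_hcs hc1)).mul_right)
    have I2 : Integrable (fun x => lieDeriv n (vbracket n X Y) lam1 s1 x * s2 x) volume :=
      Continuous.integrable_of_hasCompactSupport
        (((lieDeriv_contDiff hB hs1).continuous).mul hs2.continuous)
        ((lieDeriv_hcs hc1).mul_right)
    have J1 : Integrable (fun x => s1 x * lieDeriv n X lam2 (lieDeriv n Y lam2 s2) x) volume :=
      Continuous.integrable_of_hasCompactSupport
        (hs1.continuous.mul (lieDeriv_contDiff hX (lieDeriv_contDiff hY hs2)).continuous)
        hc1.mul_right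
    have J2 : Integrable (fun x => s1 x * lieDeriv n (vbracket n X Y) lam2 s2 x) volume :=
      Continuous.integrable_of_hasCompactSupport
        (hs1.continuous.mul (lieDeriv_contDiff hB hs2).continuous)
        hc1.mul_right
    have expand1 : ∫ x, DhatXY n X Y lam0 lam1 s1 x * s2 x
        = (∫ x, lieDeriv n X lam1 (lieDeriv n Y lam1 s1) x * s2 x)
          + c1 * ∫ x, lieDeriv n (vbracket n X Y) lam1 s1 x * s2 x := by
      rw [show (fun x => DhatXY n X Y lam0 lam1 s1 x * s2 x)
          = fun x => lieDeriv n X lam1 (lieDeriv n Y lam1 s1) x * s2 x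
            + c1 * (lieDeriv n (vbracket n X Y) lam1 s1 x * s2 x) from
        funext fun x => by show (lieDeriv n X lam1 (lieDeriv n Y lam1 s1) x
            + c1 * lieDeriv n (vbracket n X Y) lam1 s1 x) * s2 x = _; ring]
      rw [integral_add I1 (I2.const_mul c1), integral_const_mul]
    have expand2 : ∫ x, s1 x * DhatXY n X Y lam0 lam2 s2 x
        = (∫ x, s1 x * lieDeriv n X lam2 (lieDeriv n Y lam2 s2) x)
          + c2 * ∫ x, s1 x * lieDeriv n (vbracket n X Y) lam2 s2 x := by
      rw [show (fun x => s1 x * DhatXY n X Y lam0 lam2 s2 x)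
          = fun x => s1 x * lieDeriv n X lam2 (lieDeriv n Y lam2 s2) x
            + c2 * (s1 x * lieDeriv n (vbracket n X Y) lam2 s2 x) from
        funext fun x => by show s1 x * (lieDeriv n X lam2 (lieDeriv n Y lam2 s2) x
            + c2 * lieDeriv n (vbracket n X Y) lam2 s2 x) = _; ring]
      rw [integral_add J1 (J2.const_mul c2), integral_const_mul]
    have step1 : ∫ x, lieDeriv n X lam1 (lieDeriv n Y lam1 s1) x * s2 x
        = - ∫ x, lieDeriv n Y lam1 s1 x * lieDeriv n X lam2 s2 x :=
      lieD_skew hX h (lieDeriv_contDiff hY hs1) hs2 (lieDeriv_hcs hc1) hc2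
    have step2 : ∫ x, lieDeriv n Y lam1 s1 x * lieDeriv n X lam2 s2 x
        = - ∫ x, s1 x * lieDeriv n Y lam2 (lieDeriv n X lam2 s2) x :=
      lieD_skew hY h hs1 (lieDeriv_contDiff hX hs2) hc1 (lieDeriv_hcs hc2)
    have step3 : ∫ x, s1 x * lieDeriv n Y lam2 (lieDeriv n X lam2 s2) x
        = (∫ x, s1 x * lieDeriv n X lam2 (lieDeriv n Y lam2 s2) x)
          - ∫ x, s1 x * lieDeriv n (vbracket n X Y) lam2 s2 x := by
      rw [show (fun x => s1 x * lieDeriv n Y lam2 (lieDeriv n X lam2 s2) x)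
          = fun x => s1 x * lieDeriv n X lam2 (lieDeriv n Y lam2 s2) x
            - s1 x * lieDeriv n (vbracket n X Y) lam2 s2 x from
        funext fun x => by rw [lie_comm hX hY hs2 lam2 x]; ring]
      exact integral_sub J1 J2
    have step4 : ∫ x, lieDeriv n (vbracket n X Y) lam1 s1 x * s2 x
        = - ∫ x, s1 x * lieDeriv n (vbracket n X Y) lam2 s2 x :=
      lieD_skew hB h hs1 hs2 hc1 hc2
    rw [expand1, expand2, step1, step2, step3, step4, hcc]
    ring
  · intro s x
    show lieDeriv n X lam0 (lieDeriv n Y lam0 s) x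
        + ((lam0 - lam0) / (2 * lam0 - 1)) * lieDeriv n (vbracket n X Y) lam0 s x = _
    simp
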